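/- For the complete bipartite graph K_{2,n} with a and b the two vertices on the side of size 2, the shortest path graph S(K_{2,n}, a, b) is isomorphic to the complete graph K_n. -/

import Mathlib

open SimpleGraph

/-- The type of `a,b`-geodesics in `G`: paths from `a` to `b` of length `d_G(a,b)`. -/
def Geodesic {V : Type*} (G : SimpleGraph V) (a b : V) : Type _ :=
  {p : G.Walk a b // p.IsPath ∧ p.length = G.dist a b}

/-- Two geodesics differ at exactly the index `i` (comparing vertex sequences). -/
def DiffAt {V : Type*} {G : SimpleGraph V} {a b : V} (U W : Geodesic G a b) (i : ℕ) : Prop :=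
  U.1.support.getD i a ≠ W.1.support.getD i a ∧
    ∀ j, j ≠ i → U.1.support.getD j a = W.1.support.getD j a

/-- The shortest path graph `S(G,a,b)`: vertices are `a,b`-geodesics, adjacent iff their
vertex sequences differ in exactly one position. -/
def SPG {V : Type*} (G : SimpleGraph V) (a b : V) : SimpleGraph (Geodesic G a b) where
  Adj U W := ∃ i, DiffAt U W i
  symm := by
    refine ⟨?_⟩
    rintro U W ⟨i, hne, hj⟩
    exact ⟨i, hne.symm, fun j hji => (hj j hji).symm⟩
  loopless := by
    refine ⟨?_⟩
    rintro U ⟨i, hne, -⟩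
    exact hne rfl

/-- A graph is a shortest path graph if it is isomorphic to `S(G,a,b)` for some `G`, `a ≠ b`. -/
def IsSPGraph {α : Type*} (H : SimpleGraph α) : Prop :=
  ∃ (V : Type) (G : SimpleGraph V) (a b : V), a ≠ b ∧ Nonempty (H ≃g SPG G a b)

/-!
In `K_{α,β}` two distinct vertices `a, b` of the side `α` are not adjacent but have every
`k : β` as a common neighbour, so the `a,b`-geodesics are exactly the walks `a, k, b`. Any
two distinct ones differ only in the middle vertex, hence are adjacent in `S(K_{α,β}, a, b)`.
When `β` is empty there is no geodesic at all, since its first step would have to land in `β`.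
-/

namespace SimpleGraph.completeBipartiteGraph

variable {α β : Type*}

def walkVia (a b : α) (k : β) : (completeBipartiteGraph α β).Walk (.inl a) (.inl b) :=
  .cons (v := .inr k) (by simp) (.cons (by simp) .nil)

variable {a b : α}

@[simp]
lemma support_walkVia (k : β) : (walkVia a b k).support = [.inl a, .inr k, .inl b] := rfl

@[simp]
lemma length_walkVia (k : β) : (walkVia a b k).length = 2 := rfl

lemma exists_eq_walkVia_of_length_eq_two
    {p : (completeBipartiteGraph α β).Walk (.inl a) (.inl b)} (hp : p.length = 2) :
    ∃ k, p = walkVia a b k := by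
  match p, hp with
  | .cons (v := .inl _) h _, _ => simp at h
  | .cons (v := .inr k) _ (.cons _ .nil), _ => exact ⟨k, rfl⟩

lemma dist_inl_inl (hab : a ≠ b) (k : β) :
    (completeBipartiteGraph α β).dist (.inl a) (.inl b) = 2 := by
  have hcommon : ((completeBipartiteGraph α β).commonNeighbors (.inl a) (.inl b)).Nonempty :=
    ⟨.inr k, by simp [mem_commonNeighbors]⟩
  simp [dist, edist_eq_two_iff.mpr ⟨by simpa using hab, by simp, hcommon⟩]

def geodesicVia (hab : a ≠ b) (k : β) : Geodesic (completeBipartiteGraph α β) (.inl a) (.inl b) :=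
  ⟨walkVia a b k, by simp [Walk.isPath_def, hab], by simp [dist_inl_inl hab k]⟩

lemma exists_eq_geodesicVia (hab : a ≠ b)
    (U : Geodesic (completeBipartiteGraph α β) (.inl a) (.inl b)) :
    ∃ k, U = geodesicVia hab k := by
  obtain ⟨p, -, hlen⟩ := U
  obtain ⟨k⟩ : Nonempty β :=
    match p with
    | .nil => absurd rfl hab
    | .cons (v := .inl _) h _ => by simp at h
    | .cons (v := .inr k) _ _ => ⟨k⟩
  obtain ⟨l, rfl⟩ := exists_eq_walkVia_of_length_eq_two (hlen.trans (dist_inl_inl hab k))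
  exact ⟨l, rfl⟩

lemma geodesicVia_injective (hab : a ≠ b) : Function.Injective (geodesicVia (β := β) hab) :=
  fun k l h => by simpa [geodesicVia] using congrArg (·.1.support.getD 1 (.inl a)) h

lemma spg_adj_geodesicVia_iff (hab : a ≠ b) {k l : β} :
    (SPG _ _ _).Adj (geodesicVia hab k) (geodesicVia hab l) ↔ k ≠ l := by
  refine ⟨fun ⟨_, hne, _⟩ hkl => hne (by rw [hkl]), fun hkl => ⟨1, ?_, fun j hj => ?_⟩⟩
  · simpa [geodesicVia] using hkl
  · rcases j with _ | _ | _ | j <;> simp_all [geodesicVia]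

noncomputable def topIsoSPG (hab : a ≠ b) :
    (⊤ : SimpleGraph β) ≃g SPG (completeBipartiteGraph α β) (.inl a) (.inl b) where
  toEquiv := .ofBijective (geodesicVia hab) ⟨geodesicVia_injective hab,
    fun U => (exists_eq_geodesicVia hab U).imp fun _ => Eq.symm⟩
  map_rel_iff' := spg_adj_geodesicVia_iff hab

end SimpleGraph.completeBipartiteGraph

theorem stmt2 (n : ℕ) :
    Nonempty (SPG (completeBipartiteGraph (Fin 2) (Fin n)) (Sum.inl 0) (Sum.inl 1) ≃g
      (⊤ : SimpleGraph (Fin n))) :=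
  ⟨(completeBipartiteGraph.topIsoSPG (by decide)).symm⟩
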